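/- arXiv:1406.1724 — 4 statements merged into one kernel-verified Lean document; each statement's English description precedes it below -/
import Mathlib

section
/- The variance of a Rician-distributed random variable tends to 0 as the K-factor tends to infinity. Specifically, if σ² = 2γ̄/(K+1) + K/(K+1) - (π γ̄)/(2(K+1)) · L_{1/2}²(-K/(2γ̄)), where L_{1/2} is the Laguerre function of order 1/2, then σ² → 0 as K → ∞. -/
open Filter Real Topology

/-!
Write `x = -K / (2γ̄)`. The hypothesis says `L x ~ √|x| / Γ(3/2) = 2√|x| / √π`, so
`L x ^ 2 / |x| → 4 / π`, and with `|x| = K / (2γ̄)` the variance becomes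
`2γ̄ / (K + 1) + K / (K + 1) * (1 - π / 4 * (L x ^ 2 / |x|))`, which tends to `0 + 1 * (1 - 1)`.
-/

theorem Real.Gamma_three_halves : Gamma (1 / 2 + 1) = √π / 2 := by
  rw [Gamma_add_one (by norm_num), Gamma_one_half_eq]
  ring

theorem tendsto_sq_div_abs_of_tendsto_div_sqrt_div_Gamma {L : ℝ → ℝ} {l : Filter ℝ}
    (hL : Tendsto (fun x => L x / (|x| ^ ((1 : ℝ) / 2) / Gamma ((1 : ℝ) / 2 + 1))) l (𝓝 1)) :
    Tendsto (fun x => L x ^ 2 / |x|) l (𝓝 (4 / π)) := by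
  have hsq : ∀ x, (L x / (|x| ^ ((1 : ℝ) / 2) / Gamma ((1 : ℝ) / 2 + 1))) ^ 2
      = π / 4 * (L x ^ 2 / |x|) := fun x => by
    rw [Gamma_three_halves, ← sqrt_eq_rpow, div_pow, div_pow, div_pow, sq_sqrt (abs_nonneg x),
      sq_sqrt pi_pos.le, div_div_eq_mul_div]
    ring
  have hlim : Tendsto (fun x => 4 / π * (π / 4 * (L x ^ 2 / |x|))) l (𝓝 (4 / π * 1 ^ 2)) :=
    ((hL.pow 2).congr hsq).const_mul _
  rw [one_pow, mul_one] at hlim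
  refine hlim.congr fun x => ?_
  field_simp

theorem rician_variance_eq_of_pos {γbar K : ℝ} (hγ : 0 < γbar) (hK : 0 < K) (y : ℝ) :
    2 * γbar / (K + 1) + K / (K + 1) - (π * γbar) / (2 * (K + 1)) * y
      = 2 * γbar * (K + 1)⁻¹ + (1 - (K + 1)⁻¹) * (1 - π / 4 * (y / |-K / (2 * γbar)|)) := by
  rw [abs_div, abs_neg, abs_of_pos hK, abs_of_pos (by positivity : 0 < 2 * γbar)]
  field_simp
  ring

/-- The variance of a Rician-distributed envelope tends to 0 as the K-factor tends to infinity.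
`L` is the Laguerre function of order 1/2, assumed to satisfy the asymptotic
`L_{1/2}(x) → |x|^{1/2} / Γ(1/2 + 1)` as `x → -∞` (in the sense of asymptotic equivalence). -/
theorem rician_variance_tendsto_zero
    (γbar : ℝ) (hγ : 0 < γbar) (L : ℝ → ℝ)
    (hL : Tendsto (fun x => L x / (|x| ^ ((1 : ℝ) / 2) / Real.Gamma ((1 : ℝ) / 2 + 1)))
      atBot (nhds 1)) :
    Tendsto (fun K : ℝ =>
        2 * γbar / (K + 1) + K / (K + 1)
          - (π * γbar) / (2 * (K + 1)) * (L (-K / (2 * γbar))) ^ 2)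
      atTop (nhds 0) := by
  have hx : Tendsto (fun K : ℝ => -K / (2 * γbar)) atTop atBot :=
    tendsto_neg_atTop_atBot.atBot_div_const (by positivity)
  have hratio := (tendsto_sq_div_abs_of_tendsto_div_sqrt_div_Gamma hL).comp hx
  have hinv : Tendsto (fun K : ℝ => (K + 1)⁻¹) atTop (𝓝 0) :=
    tendsto_inv_atTop_zero.comp (tendsto_atTop_add_const_right _ 1 tendsto_id)
  have hlim : Tendsto (fun K : ℝ => 2 * γbar * (K + 1)⁻¹ + (1 - (K + 1)⁻¹) *
      (1 - π / 4 * (L (-K / (2 * γbar)) ^ 2 / |-K / (2 * γbar)|))) atTop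
      (𝓝 (2 * γbar * 0 + (1 - 0) * (1 - π / 4 * (4 / π)))) :=
    (hinv.const_mul _).add ((tendsto_const_nhds.sub hinv).mul
      (tendsto_const_nhds.sub (hratio.const_mul _)))
  have hone : π / 4 * (4 / π) = 1 := by field_simp
  rw [hone, mul_zero, sub_zero, sub_self, mul_zero, add_zero] at hlim
  refine hlim.congr' ?_
  filter_upwards [eventually_gt_atTop 0] with K hK
  exact (rician_variance_eq_of_pos hγ hK _).symm
end

section
/- If X and Y are independent random variables where X is exponentially distributed with mean γ̄_s and Y has the noncentral chi-square-type density f_Y(y) = ((1+K)/γ̄) e^{-K-(1+K)y/γ̄} I_0(2√(K(1+K)y/γ̄)), then the density of Z = X/Y is f_Z(z) = ((1+K)γ̄/γ̄_s) e^{-K + K(1+K)/((1+K)+ (γ̄/γ̄_s)z)} · ((1+K)² + z γ̄/γ̄_s) / ((1+K) + z γ̄/γ̄_s)³. -/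
/-!
Conditioning on `Y`, the exponential law of `X` gives `P(X/Y ≤ a) = 1 - E[exp(-aY/γ̄s)]`, so the
distribution function of `Z` is read off the Laplace transform of `Y`. Expanding `I₀` in its power
series and integrating term by term against `e^{-ly}` (Gamma integrals) gives
`∫₀^∞ I₀(2√(by)) e^{-ly} dy = e^{b/l}/l`, hence
`E[e^{-sY}] = (1+K)/(1+K+γ̄s) · exp(-K + K(1+K)/(1+K+γ̄s))`. The claimed density is the
derivative of `1 - E[e^{-zY/γ̄s}]` in `z`, and the fundamental theorem of calculus closes the
argument.
-/

open MeasureTheory Real ProbabilityTheory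

noncomputable def besselI0 (x : ℝ) : ℝ := ∑' n : ℕ, (x / 2) ^ (2 * n) / ((n.factorial : ℝ)) ^ 2

open Set Filter Nat

lemma summable_pow_div_factorial_sq (x : ℝ) :
    Summable fun n : ℕ => x ^ n / (n ! : ℝ) ^ 2 := by
  refine (Real.summable_pow_div_factorial |x|).of_norm_bounded fun n => ?_
  have h1 : (1 : ℝ) ≤ n ! := by exact_mod_cast n.factorial_pos
  rw [norm_div, norm_pow, norm_pow, Real.norm_eq_abs, Real.norm_natCast]
  exact div_le_div_of_nonneg_left (by positivity) (by positivity) (by nlinarith)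

lemma besselI0_eq_tsum (x : ℝ) :
    besselI0 x = ∑' n : ℕ, ((x / 2) ^ 2) ^ n / (n ! : ℝ) ^ 2 := by
  simp only [besselI0, pow_mul]

lemma measurable_besselI0 : Measurable besselI0 := by
  refine measurable_of_tendsto_metrizable (f := fun N x =>
    ∑ n ∈ Finset.range N, ((x / 2) ^ 2) ^ n / (n ! : ℝ) ^ 2) (fun N => by fun_prop) ?_
  refine tendsto_pi_nhds.2 fun x => ?_
  rw [besselI0_eq_tsum]
  exact (summable_pow_div_factorial_sq _).hasSum.tendsto_sum_nat

lemma besselI0_two_mul_sqrt {b : ℝ} (hb : 0 ≤ b) :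
    besselI0 (2 * √b) = ∑' n : ℕ, b ^ n / (n ! : ℝ) ^ 2 := by
  rw [besselI0_eq_tsum, mul_div_cancel_left₀ _ two_ne_zero, sq_sqrt hb]

lemma lintegral_Ioi_pow_mul_exp_neg_mul (n : ℕ) {l : ℝ} (hl : 0 < l) :
    ∫⁻ y in Ioi 0, ENNReal.ofReal (y ^ n * exp (-(l * y)))
      = ENNReal.ofReal (n ! / l ^ (n + 1)) := by
  have hpow : ∀ y : ℝ, y ^ n = y ^ ((n + 1 : ℝ) - 1) := fun y => by
    rw [add_sub_cancel_right, rpow_natCast]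
  have hint : IntegrableOn (fun y : ℝ => y ^ n * exp (-(l * y))) (Ioi 0) := by
    simpa only [rpow_one, rpow_natCast, neg_mul] using
      integrableOn_rpow_mul_exp_neg_mul_rpow (p := 1) (s := n)
        (by linarith [n.cast_nonneg (α := ℝ)]) zero_lt_one hl
  rw [← ofReal_integral_eq_lintegral_ofReal hint
    ((ae_restrict_iff' measurableSet_Ioi).2 (ae_of_all _ fun y (hy : 0 < y) => by positivity))]
  simp_rw [hpow]
  rw [integral_rpow_mul_exp_neg_mul_Ioi (by positivity) hl, Gamma_nat_eq_factorial,
    ← Nat.cast_succ, rpow_natCast, one_div_pow, one_div_mul_eq_div]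

lemma lintegral_Ioi_besselI0_two_mul_sqrt_mul_exp_neg_mul {b l : ℝ} (hb : 0 ≤ b) (hl : 0 < l) :
    ∫⁻ y in Ioi 0, ENNReal.ofReal (besselI0 (2 * √(b * y)) * exp (-(l * y)))
      = ENNReal.ofReal (exp (b / l) / l) := by
  have hseries : ∀ y ∈ Ioi (0 : ℝ),
      ENNReal.ofReal (besselI0 (2 * √(b * y)) * exp (-(l * y)))
      = ∑' n : ℕ, ENNReal.ofReal (b ^ n / (n ! : ℝ) ^ 2)
          * ENNReal.ofReal (y ^ n * exp (-(l * y))) := by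
    intro y (hy : 0 < y)
    have hsum := (summable_pow_div_factorial_sq (b * y)).mul_right (exp (-(l * y)))
    rw [besselI0_two_mul_sqrt (by positivity), ← tsum_mul_right,
      ENNReal.ofReal_tsum_of_nonneg (fun n => by positivity) hsum]
    congr with n
    rw [← ENNReal.ofReal_mul (by positivity), mul_pow]
    ring_nf
  have hexp := (NormedSpace.expSeries_div_hasSum_exp (b / l)).div_const l
  rw [← exp_eq_exp_ℝ] at hexp
  rw [setLIntegral_congr_fun measurableSet_Ioi hseries, lintegral_tsum (fun n => by fun_prop),
    ← hexp.tsum_eq, ENNReal.ofReal_tsum_of_nonneg (fun n => by positivity) hexp.summable]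
  congr with n
  rw [lintegral_const_mul' _ _ ENNReal.ofReal_ne_top, lintegral_Ioi_pow_mul_exp_neg_mul n hl,
    ← ENNReal.ofReal_mul (by positivity)]
  congr 1
  rw [div_pow]
  field_simp
  ring

lemma setLIntegral_Iic_ofReal_indicator_Ici (f : ℝ → ℝ) (a : ℝ) :
    ∫⁻ z in Iic a, ENNReal.ofReal ((Ici 0).indicator f z)
      = ∫⁻ z in Icc 0 a, ENNReal.ofReal (f z) := by
  change ∫⁻ z in Iic a, (ENNReal.ofReal ∘ (Ici 0).indicator f) z = _
  rw [← indicator_comp_of_zero ENNReal.ofReal_zero, lintegral_indicator measurableSet_Ici,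
    Measure.restrict_restrict measurableSet_Ici, Ici_inter_Iic]
  rfl

lemma withDensity_ofReal_indicator_Ici_Iic_zero (f : ℝ → ℝ) :
    volume.withDensity (fun x => ENNReal.ofReal ((Ici 0).indicator f x)) (Iic 0) = 0 := by
  rw [withDensity_apply _ measurableSet_Iic, setLIntegral_Iic_ofReal_indicator_Ici,
    Icc_self, setLIntegral_measure_zero _ _ (measure_singleton 0)]

lemma lintegral_Icc_ofReal_eq_sub_of_hasDerivAt {F f : ℝ → ℝ} {a b : ℝ} (hab : a ≤ b)
    (hderiv : ∀ x ∈ Icc a b, HasDerivAt F (f x) x) (hf : ∀ x ∈ Ioo a b, 0 ≤ f x) :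
    ∫⁻ x in Icc a b, ENNReal.ofReal (f x) = ENNReal.ofReal (F b - F a) := by
  have hderiv' : ∀ x ∈ Ioo a b, HasDerivAt F (f x) x :=
    fun x hx => hderiv x (Ioo_subset_Icc_self hx)
  have hcont : ContinuousOn F (Icc a b) := HasDerivAt.continuousOn hderiv
  have hint : IntegrableOn f (Ioc a b) :=
    intervalIntegral.integrableOn_deriv_of_nonneg hcont hderiv' hf
  rw [setLIntegral_congr Ioo_ae_eq_Icc.symm, ← ofReal_integral_eq_lintegral_ofReal
    (hint.mono_set Ioo_subset_Ioc_self) ((ae_restrict_iff' measurableSet_Ioo).2 (ae_of_all _ hf)),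
    ← integral_Ioc_eq_integral_Ioo, ← intervalIntegral.integral_of_le hab,
    intervalIntegral.integral_eq_sub_of_hasDerivAt_of_le hab hcont hderiv'
      ((intervalIntegrable_iff_integrableOn_Ioc_of_le hab).2 hint)]

lemma withDensity_ofReal_indicator_Ici_exp_eq_expMeasure (γs : ℝ) :
    volume.withDensity
        (fun x => ENNReal.ofReal ((Ici 0).indicator (fun x => 1 / γs * exp (-x / γs)) x))
      = expMeasure γs⁻¹ := by
  change _ = volume.withDensity (exponentialPDF γs⁻¹)
  congr 1
  funext x
  by_cases hx : 0 ≤ x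
  · rw [exponentialPDF_of_nonneg hx, indicator_of_mem (mem_Ici.2 hx), one_div, neg_div,
      div_eq_inv_mul]
  · rw [exponentialPDF_of_neg (not_le.1 hx), indicator_of_notMem (fun h => hx (mem_Ici.1 h)),
      ENNReal.ofReal_zero]

section Ratio

variable {Ω : Type*} [MeasurableSpace Ω] {P : Measure Ω} {X Y : Ω → ℝ}

lemma ae_pos_of_map_eq_withDensity_ofReal_indicator_Ici (hX : AEMeasurable X P) {f : ℝ → ℝ}
    (h : P.map X = volume.withDensity fun x => ENNReal.ofReal ((Ici 0).indicator f x)) :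
    ∀ᵐ ω ∂P, 0 < X ω := by
  refine ae_of_ae_map hX ?_
  rw [h, ae_iff]
  convert withDensity_ofReal_indicator_Ici_Iic_zero f using 2
  ext x
  simp

lemma measure_div_le_eq_zero_of_neg (hX : ∀ᵐ ω ∂P, 0 ≤ X ω)
    (hY : ∀ᵐ ω ∂P, 0 ≤ Y ω) {a : ℝ} (ha : a < 0) : P {ω | X ω / Y ω ≤ a} = 0 := by
  refine measure_eq_zero_iff_ae_notMem.2 ?_
  filter_upwards [hX, hY] with ω hXω hYω hle
  exact (div_nonneg hXω hYω).not_gt (lt_of_le_of_lt hle ha)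

lemma measure_div_le_eq_lintegral [IsFiniteMeasure P] (hX : Measurable X) (hY : Measurable Y)
    (hXY : IndepFun X Y P) (hYpos : ∀ᵐ ω ∂P, 0 < Y ω) (a : ℝ) :
    P {ω | X ω / Y ω ≤ a} = ∫⁻ y, P.map X (Iic (a * y)) ∂(P.map Y) := by
  have hS : MeasurableSet {p : ℝ × ℝ | p.1 ≤ a * p.2} :=
    measurableSet_le measurable_fst (measurable_snd.const_mul a)
  calc P {ω | X ω / Y ω ≤ a} = P {ω | X ω ≤ a * Y ω} := by
        refine measure_congr (eventuallyEq_set.2 ?_)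
        filter_upwards [hYpos] with ω hω
        exact div_le_iff₀ hω
    _ = P.map (fun ω => (X ω, Y ω)) {p | p.1 ≤ a * p.2} := by
        rw [Measure.map_apply (hX.prodMk hY) hS]
        rfl
    _ = ∫⁻ y, P.map X (Iic (a * y)) ∂(P.map Y) := by
        rw [(indepFun_iff_map_prod_eq_prod_map_map hX.aemeasurable hY.aemeasurable).1 hXY,
          Measure.prod_apply_symm hS]
        rfl

lemma measure_div_le_of_map_eq_expMeasure [IsProbabilityMeasure P] (hX : Measurable X)
    (hY : Measurable Y) (hXY : IndepFun X Y P) {r : ℝ} (hr : 0 < r)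
    (hXexp : P.map X = expMeasure r) (hYpos : ∀ᵐ ω ∂P, 0 < Y ω) {a : ℝ} (ha : 0 ≤ a) :
    P {ω | X ω / Y ω ≤ a}
      = 1 - ∫⁻ y, ENNReal.ofReal (exp (-(r * a * y))) ∂(P.map Y) := by
  have hYpos' : ∀ᵐ y ∂(P.map Y), 0 < y :=
    (ae_map_iff hY.aemeasurable measurableSet_Ioi).2 hYpos
  have hle : ∀ᵐ y ∂(P.map Y), ENNReal.ofReal (exp (-(r * a * y))) ≤ 1 := by
    filter_upwards [hYpos'] with y hy
    exact ENNReal.ofReal_le_one.2 (exp_le_one_iff.2 (by nlinarith [mul_nonneg hr.le ha]))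
  have hcdf : ∀ᵐ y ∂(P.map Y),
      P.map X (Iic (a * y)) = 1 - ENNReal.ofReal (exp (-(r * a * y))) := by
    filter_upwards [hYpos'] with y hy
    rw [hXexp, expMeasure, gammaMeasure, withDensity_apply _ measurableSet_Iic]
    change ∫⁻ x in Iic (a * y), exponentialPDF r x = _
    rw [lintegral_exponentialPDF_eq_antiDeriv hr, if_pos (mul_nonneg ha hy.le),
      ENNReal.ofReal_sub _ (exp_nonneg _), ENNReal.ofReal_one,
      mul_assoc]
  have : IsProbabilityMeasure (P.map Y) := Measure.isProbabilityMeasure_map hY.aemeasurable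
  rw [measure_div_le_eq_lintegral hX hY hXY hYpos a, lintegral_congr_ae hcdf,
    lintegral_sub (by fun_prop) ((lintegral_mono_ae hle).trans_lt (by simp)).ne hle,
    lintegral_one, measure_univ]

end Ratio

section Rician

variable {K γbar : ℝ}

noncomputable def ricianPowerPDFReal (K γbar y : ℝ) : ℝ :=
  ((1 + K) / γbar) * exp (-K - (1 + K) * y / γbar) * besselI0 (2 * √(K * (1 + K) * y / γbar))

noncomputable def ricianPowerMeasure (K γbar : ℝ) : Measure ℝ :=
  volume.withDensity fun y => ENNReal.ofReal ((Ici 0).indicator (ricianPowerPDFReal K γbar) y)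

noncomputable def ricianPowerLaplace (K γbar s : ℝ) : ℝ :=
  (1 + K) / (1 + K + γbar * s) * exp (-K + K * (1 + K) / (1 + K + γbar * s))

lemma measurable_ricianPowerPDFReal : Measurable (ricianPowerPDFReal K γbar) :=
  (by fun_prop : Measurable fun y => (1 + K) / γbar * exp (-K - (1 + K) * y / γbar)).mul
    (measurable_besselI0.comp (by fun_prop))

lemma ricianPowerLaplace_zero (hK : 1 + K ≠ 0) : ricianPowerLaplace K γbar 0 = 1 := by
  simp only [ricianPowerLaplace, mul_zero, add_zero, div_self hK, mul_div_cancel_right₀ _ hK,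
    neg_add_cancel, exp_zero, one_mul]

lemma lintegral_exp_neg_mul_ricianPowerMeasure (hK : 0 ≤ K) (hγbar : 0 < γbar) {s : ℝ}
    (hs : 0 ≤ s) :
    ∫⁻ y, ENNReal.ofReal (exp (-(s * y))) ∂(ricianPowerMeasure K γbar)
      = ENNReal.ofReal (ricianPowerLaplace K γbar s) := by
  set β := K * (1 + K) / γbar with hβ
  set l := s + (1 + K) / γbar with hl_def
  have hl : 0 < l := by positivity
  have hγl : γbar * l = 1 + K + γbar * s := by rw [hl_def]; field_simp; ring
  have hfactor : ∀ y, exp (-(s * y)) * ricianPowerPDFReal K γbar y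
      = (1 + K) / γbar * exp (-K) * (besselI0 (2 * √(β * y)) * exp (-(l * y))) := by
    intro y
    have hexp : exp (-(s * y)) * exp (-K - (1 + K) * y / γbar) = exp (-K) * exp (-(l * y)) := by
      rw [← exp_add, ← exp_add, hl_def]
      ring_nf
    rw [ricianPowerPDFReal, show K * (1 + K) * y / γbar = β * y by ring]
    linear_combination (1 + K) / γbar * besselI0 (2 * √(β * y)) * hexp
  rw [ricianPowerMeasure, lintegral_withDensity_eq_lintegral_mul _
      (measurable_ricianPowerPDFReal.indicator measurableSet_Ici).ennreal_ofReal (by fun_prop)]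
  calc ∫⁻ y, ENNReal.ofReal ((Ici 0).indicator (ricianPowerPDFReal K γbar) y)
        * ENNReal.ofReal (exp (-(s * y)))
      = ∫⁻ y in Ioi 0, ENNReal.ofReal (exp (-(s * y)) * ricianPowerPDFReal K γbar y) := by
        rw [setLIntegral_congr Ioi_ae_eq_Ici, ← lintegral_indicator measurableSet_Ici]
        congr with y
        by_cases hy : y ∈ Ici 0
        · rw [indicator_of_mem hy, indicator_of_mem hy, mul_comm (exp _),
            ENNReal.ofReal_mul' (exp_nonneg _)]
        · simp [hy]
    _ = ENNReal.ofReal ((1 + K) / γbar * exp (-K)) * ENNReal.ofReal (exp (β / l) / l) := by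
        simp_rw [hfactor, ENNReal.ofReal_mul (by positivity : 0 ≤ (1 + K) / γbar * exp (-K))]
        rw [lintegral_const_mul' _ _ ENNReal.ofReal_ne_top,
          lintegral_Ioi_besselI0_two_mul_sqrt_mul_exp_neg_mul (by positivity) hl]
    _ = ENNReal.ofReal (ricianPowerLaplace K γbar s) := by
        rw [← ENNReal.ofReal_mul (by positivity), ricianPowerLaplace, ← hγl,
          show K * (1 + K) / (γbar * l) = β / l by rw [hβ]; field_simp, exp_add]
        congr 1
        field_simp

lemma hasDerivAt_ricianPowerLaplace {s : ℝ} (hs : 1 + K + γbar * s ≠ 0) :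
    HasDerivAt (ricianPowerLaplace K γbar)
      (-(γbar * (1 + K) * exp (-K + K * (1 + K) / (1 + K + γbar * s))
        * ((1 + K) ^ 2 + γbar * s) / (1 + K + γbar * s) ^ 3)) s := by
  have hu : HasDerivAt (fun s => 1 + K + γbar * s) γbar s := by
    simpa using ((hasDerivAt_id s).const_mul γbar).const_add (1 + K)
  have hinv : HasDerivAt (fun s => (1 + K + γbar * s)⁻¹) (-γbar / (1 + K + γbar * s) ^ 2) s :=
    hu.inv hs
  have hexp := ((hinv.const_mul (K * (1 + K))).const_add (-K)).exp
  have hfun : ricianPowerLaplace K γbar = fun t =>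
      (1 + K) * (1 + K + γbar * t)⁻¹ * exp (-K + K * (1 + K) * (1 + K + γbar * t)⁻¹) := by
    funext t
    simp only [ricianPowerLaplace, div_eq_mul_inv]
  rw [hfun]
  refine ((hinv.const_mul (1 + K)).mul hexp).congr_deriv ?_
  field_simp
  ring

lemma hasDerivAt_neg_ricianPowerLaplace_inv_mul {γs z : ℝ} (hγs : γs ≠ 0)
    (hz : 1 + K + γbar / γs * z ≠ 0) :
    HasDerivAt (fun z => -ricianPowerLaplace K γbar (γs⁻¹ * z))
      ((1 + K) * γbar / γs * exp (-K + K * (1 + K) / ((1 + K) + (γbar / γs) * z))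
        * (((1 + K) ^ 2 + z * γbar / γs) / ((1 + K) + z * γbar / γs) ^ 3)) z := by
  have hz' : 1 + K + γbar * (γs⁻¹ * z) ≠ 0 := by rwa [← mul_assoc, ← div_eq_mul_inv]
  refine ((hasDerivAt_ricianPowerLaplace hz').comp z
    ((hasDerivAt_id z).const_mul γs⁻¹)).neg.congr_deriv ?_
  rw [show γbar * (γs⁻¹ * z) = γbar / γs * z by ring]
  field_simp

end Rician

/-- If `X` is exponential with mean `γ̄s` and `Y` has the Rician-power density
`f_Y(y) = ((1+K)/γ̄) e^{-K-(1+K)y/γ̄} I₀(2√(K(1+K)y/γ̄))`, with `X, Y` independent, then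
`Z = X/Y` has density
`f_Z(z) = ((1+K)γ̄/γ̄s) e^{-K + K(1+K)/((1+K)+(γ̄/γ̄s)z)}
  ((1+K)² + zγ̄/γ̄s)/((1+K)+zγ̄/γ̄s)³` on `z ≥ 0`. -/
theorem ratio_rayleigh_rician_density
    {Ω : Type*} [MeasureSpace Ω] (P : Measure Ω) [IsProbabilityMeasure P]
    (γs γbar K : ℝ) (hγs : 0 < γs) (hγbar : 0 < γbar) (hK : 0 ≤ K)
    (X Y : Ω → ℝ) (hX : Measurable X) (hY : Measurable Y)
    (hindep : IndepFun X Y P)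
    (hmapX : Measure.map X P = volume.withDensity
      (fun x => ENNReal.ofReal
        (Set.indicator (Set.Ici (0 : ℝ)) (fun x => (1 / γs) * Real.exp (-x / γs)) x)))
    (hmapY : Measure.map Y P = volume.withDensity
      (fun y => ENNReal.ofReal
        (Set.indicator (Set.Ici (0 : ℝ))
          (fun y => ((1 + K) / γbar) * Real.exp (-K - (1 + K) * y / γbar)
            * besselI0 (2 * Real.sqrt (K * (1 + K) * y / γbar))) y))) :
    Measure.map (fun ω => X ω / Y ω) P = volume.withDensity
      (fun z => ENNReal.ofReal
        (Set.indicator (Set.Ici (0 : ℝ))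
          (fun z => ((1 + K) * γbar / γs)
            * Real.exp (-K + K * (1 + K) / ((1 + K) + (γbar / γs) * z))
            * (((1 + K) ^ 2 + z * γbar / γs) / ((1 + K) + z * γbar / γs) ^ 3)) z)) := by
  have hXpos := ae_pos_of_map_eq_withDensity_ofReal_indicator_Ici hX.aemeasurable hmapX
  have hYpos := ae_pos_of_map_eq_withDensity_ofReal_indicator_Ici hY.aemeasurable hmapY
  refine Measure.ext_of_Iic _ _ fun a => ?_
  rw [Measure.map_apply (f := fun ω => X ω / Y ω) (hX.div hY) measurableSet_Iic,
    withDensity_apply _ measurableSet_Iic, setLIntegral_Iic_ofReal_indicator_Ici]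
  change P {ω | X ω / Y ω ≤ a} = _
  rcases lt_or_ge a 0 with ha | ha
  · rw [measure_div_le_eq_zero_of_neg (hXpos.mono fun _ => le_of_lt)
      (hYpos.mono fun _ => le_of_lt) ha, Icc_eq_empty_of_lt ha, Measure.restrict_empty,
      lintegral_zero_measure]
  · have hL : 0 ≤ ricianPowerLaplace K γbar (γs⁻¹ * a) := by
      unfold ricianPowerLaplace
      positivity
    rw [measure_div_le_of_map_eq_expMeasure hX hY hindep (inv_pos.2 hγs)
      (hmapX.trans (withDensity_ofReal_indicator_Ici_exp_eq_expMeasure γs)) hYpos ha,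
      show Measure.map Y P = ricianPowerMeasure K γbar from hmapY,
      lintegral_exp_neg_mul_ricianPowerMeasure hK hγbar (by positivity),
      lintegral_Icc_ofReal_eq_sub_of_hasDerivAt ha
        (fun z hz => hasDerivAt_neg_ricianPowerLaplace_inv_mul hγs.ne'
          (by have := hz.1; positivity))
        (fun z hz => by have := hz.1; positivity),
      mul_zero, ricianPowerLaplace_zero (by positivity), ← ENNReal.ofReal_one,
      ← ENNReal.ofReal_sub _ hL]
    congr 1
    ring
end

section
/- For x > 0, -Ei(-x) - (log(1/x) - γ) → 0 as x → 0⁺, where γ is the Euler–Mascheroni constant; consequently the capacity C = -Ei(-x) with x = λ log(2)(γ̄_p γ̄_ps + 1) γ̄_sp/γ̄_s satisfies C / log 2 → log₂(1/x) - γ/log 2 as γ̄_s → ∞, i.e., the fading capacity equals the AWGN capacity minus the constant γ (in nats). -/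
open Filter Real

/-- The exponential integral `Ei(x) = -∫_{-x}^∞ e^{-t}/t dt` (for `x < 0`). -/
noncomputable def Ei (x : ℝ) : ℝ := -∫ t in Set.Ioi (-x), Real.exp (-t) / t

/-!
For `x > 0`, `-Ei(-x) = ∫_x^∞ e^{-t}/t dt`. Integrating by parts against `log t`,
`-Ei(-x) = ∫_x^∞ log t · e^{-t} dt - e^{-x} log x`, and `∫_0^∞ log t · e^{-t} dt = Γ'(1) = -γ`.
Hence `-Ei(-x) + log x + γ = (∫_x^∞ - ∫_0^∞) log t · e^{-t} dt + (1 - e^{-x}) log x`, where both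
terms vanish as `x → 0⁺`. The capacity statement is the same limit along `x = c / γ̄_s` with
`c > 0`, divided by `log 2`.
-/

open Set MeasureTheory
open scoped Topology

lemma tendsto_setIntegral_Ioi_nhdsGT {E : Type*} [NormedAddCommGroup E] [NormedSpace ℝ E]
    {f : ℝ → E} {a : ℝ} (hf : IntegrableOn f (Ioi a)) :
    Tendsto (fun x => ∫ t in Ioi x, f t) (𝓝[>] a) (𝓝 (∫ t in Ioi a, f t)) := by
  have hIoc : Tendsto (fun x => ∫ t in Ioc a x, f t) (𝓝[>] a) (𝓝 0) := by
    have := intervalIntegral.continuousOn_primitive (μ := volume) (b := a + 1)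
      ((integrableOn_Icc_iff_integrableOn_Ioc).2 (hf.mono_set Ioc_subset_Ioi_self))
      a ⟨le_rfl, by linarith⟩
    rw [ContinuousWithinAt, nhdsWithin_Icc_eq_nhdsGE (by linarith : a < a + 1)] at this
    simpa using this.mono_left (nhdsWithin_mono _ Ioi_subset_Ici_self)
  have h := hIoc.const_sub (∫ t in Ioi a, f t)
  rw [sub_zero] at h
  refine h.congr' ?_
  filter_upwards [self_mem_nhdsWithin] with x (hx : a < x)
  rw [← Ioc_union_Ioi_eq_Ioi hx.le, setIntegral_union (Ioc_disjoint_Ioi le_rfl) measurableSet_Ioi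
    (hf.mono_set Ioc_subset_Ioi_self) (hf.mono_set (Ioi_subset_Ioi hx.le)), add_sub_cancel_left]

lemma integral_log_mul_exp_neg :
    ∫ t in Ioi 0, log t * exp (-t) = -eulerMascheroniConstant := by
  have hGamma : Complex.Gamma =ᶠ[𝓝 1] Complex.GammaIntegral := by
    filter_upwards [Complex.continuous_re.isOpen_preimage _ isOpen_Ioi |>.mem_nhds
      (by norm_num : (1 : ℂ).re ∈ Ioi 0)] with s hs using Complex.Gamma_eq_integral hs
  have h := ((Complex.hasDerivAt_GammaIntegral (s := 1) (by norm_num)).congr_of_eventuallyEq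
    hGamma).unique Complex.hasDerivAt_Gamma_one
  simp only [sub_self, Complex.cpow_zero, one_mul, ← Complex.ofReal_mul] at h
  rw [integral_complex_ofReal] at h
  exact_mod_cast h

-- Bochner integrals of non-integrable functions vanish, and this one is `-γ ≠ 0`.
lemma integrableOn_log_mul_exp_neg : IntegrableOn (fun t => log t * exp (-t)) (Ioi 0) :=
  Integrable.of_integral_ne_zero <| by
    rw [integral_log_mul_exp_neg]
    linarith [one_half_lt_eulerMascheroniConstant]

lemma integrableOn_exp_neg_div_Ioi {x : ℝ} (hx : 0 < x) :
    IntegrableOn (fun t => exp (-t) / t) (Ioi x) := by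
  refine ((integrableOn_exp_neg_Ioi x).div_const x).mono' ?_ ?_
  · exact (by fun_prop : Continuous fun t => exp (-t)).measurable.div measurable_id
      |>.aestronglyMeasurable
  · filter_upwards [ae_restrict_mem measurableSet_Ioi] with t (ht : x < t)
    rw [norm_of_nonneg (by have := hx.trans ht; positivity)]
    gcongr

lemma tendsto_log_mul_exp_neg_atTop : Tendsto (fun t => log t * exp (-t)) atTop (𝓝 0) := by
  refine squeeze_zero_norm' ?_ (by simpa using tendsto_pow_mul_exp_neg_atTop_nhds_zero 1)
  filter_upwards [eventually_ge_atTop 1] with t ht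
  rw [norm_mul, norm_of_nonneg (exp_pos _).le, norm_of_nonneg (log_nonneg ht)]
  gcongr
  exact log_le_self (by linarith)

lemma tendsto_one_sub_exp_neg_mul_log :
    Tendsto (fun x => (1 - exp (-x)) * log x) (𝓝[>] 0) (𝓝 0) := by
  have hxlog : Tendsto (fun x => x * log x) (𝓝[>] 0) (𝓝 0) := by
    simpa using continuous_mul_log.tendsto 0 |>.mono_left nhdsWithin_le_nhds
  refine squeeze_zero_norm' ?_ (by simpa using hxlog.norm)
  filter_upwards [self_mem_nhdsWithin] with x (hx : 0 < x)
  rw [norm_mul, norm_eq_abs, norm_eq_abs]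
  gcongr
  · simpa using exp_le_one_iff.2 (neg_nonpos.2 hx.le)
  · linarith [add_one_le_exp (-x)]

lemma integral_exp_neg_div_Ioi {x : ℝ} (hx : 0 < x) :
    ∫ t in Ioi x, exp (-t) / t = (∫ t in Ioi x, log t * exp (-t)) - exp (-x) * log x := by
  have h := integral_Ioi_mul_deriv_eq_deriv_mul (a := x) (b' := 0)
    (u := log) (u' := fun t => t⁻¹) (v := fun t => -exp (-t)) (v' := fun t => exp (-t))
    (fun t ht => hasDerivAt_log (hx.trans ht).ne')
    (fun t _ => by simpa using (hasDerivAt_neg t).exp.fun_neg)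
    (integrableOn_log_mul_exp_neg.mono_set (Ioi_subset_Ioi hx.le))
    ((integrableOn_exp_neg_div_Ioi hx).neg.congr_fun (fun t _ => by simp [div_eq_inv_mul])
      measurableSet_Ioi)
    (((continuousAt_log hx.ne').mul (by fun_prop)).tendsto.mono_left nhdsWithin_le_nhds)
    (by simpa [Pi.mul_def] using tendsto_log_mul_exp_neg_atTop.neg)
  simp only [Pi.mul_apply, mul_neg, integral_neg, ← div_eq_inv_mul] at h
  linarith

theorem tendsto_neg_Ei_neg_sub_log_sub_eulerMascheroni :
    Tendsto (fun x => -Ei (-x) - (log (1 / x) - eulerMascheroniConstant)) (𝓝[>] 0) (𝓝 0) := by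
  have h := ((tendsto_setIntegral_Ioi_nhdsGT integrableOn_log_mul_exp_neg).sub_const
    (-eulerMascheroniConstant)).add tendsto_one_sub_exp_neg_mul_log
  rw [integral_log_mul_exp_neg, sub_self, zero_add] at h
  refine h.congr' ?_
  filter_upwards [self_mem_nhdsWithin] with x (hx : 0 < x)
  rw [Ei, neg_neg, neg_neg, integral_exp_neg_div_Ioi hx, one_div, log_inv]
  ring

/-- `-Ei(-x) - (log(1/x) - γ) → 0` as `x → 0⁺`, where `γ` is the Euler–Mascheroni constant;
consequently with `x = λ log 2 (γ̄_p γ̄_ps + 1) γ̄_sp / γ̄_s`, as `γ̄_s → ∞` the capacity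
`C/log 2 = (-Ei(-x))/log 2` approaches `log₂(1/x) - γ/log 2`. -/
theorem Ei_near_zero_and_high_snr_capacity
    (lam γp γps γsp : ℝ) (hlam : 0 < lam) (hγp : 0 < γp) (hγps : 0 < γps) (hγsp : 0 < γsp) :
    Tendsto (fun x : ℝ => -Ei (-x) - (Real.log (1 / x) - Real.eulerMascheroniConstant))
        (nhdsWithin 0 (Set.Ioi 0)) (nhds 0)
    ∧ Tendsto (fun γs : ℝ =>
          (-Ei (-(lam * Real.log 2 * (γp * γps + 1) * γsp / γs))) / Real.log 2
            - (Real.logb 2 (1 / (lam * Real.log 2 * (γp * γps + 1) * γsp / γs))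
                - Real.eulerMascheroniConstant / Real.log 2))
        atTop (nhds 0) := by
  refine ⟨tendsto_neg_Ei_neg_sub_log_sub_eulerMascheroni, ?_⟩
  have hc : 0 < lam * log 2 * (γp * γps + 1) * γsp := by positivity
  have hx : Tendsto (fun γs => lam * log 2 * (γp * γps + 1) * γsp / γs) atTop (𝓝[>] 0) :=
    tendsto_nhdsWithin_iff.2 ⟨tendsto_id.const_div_atTop _,
      (eventually_gt_atTop 0).mono fun _ hγs => div_pos hc hγs⟩
  have h := (tendsto_neg_Ei_neg_sub_log_sub_eulerMascheroni.comp hx).div_const (log 2)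
  rw [zero_div] at h
  refine h.congr fun γs => ?_
  simp only [Function.comp_apply, logb]
  ring
end

section
/- In the N-user underlay cognitive parallel access channel, the combined multiuser diversity gain satisfies γ̄_PAC(N) ≥ γ̄_o(N), where γ̄_PAC(N) = E[max_n γ_{s,n} Q_p/(γ_{sp,n}(1+γ̄_p γ_{ps,n}))]/E[γ_{s,n} Q_p/(γ_{sp,n}(1+γ̄_p γ_{ps,n}))] and γ̄_o(N) = E[max_n γ_{s,n}]/E[γ_{s,n}]. This follows because: (a) selecting the user n' maximizing γ_{s,n} is suboptimal for the SINR objective; (b) γ_{s,n} is independent of (γ_{sp,n}, γ_{ps,n}); and (c) the interference terms for user n' and a generic user n are identically distributed. -/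
/-!
Write `J n = Qp / (γsp n * (1 + γp * γps n))`, so that the SINR of user `n` is `γs n * J n`.
Let `n'` be the first user maximising `γs n`; it is a measurable function of the vector `γs`,
hence independent of the vector `J`. Since `max_n γs n * J n ≥ γs n' * J n'` and all `J n` have
the same mean `E J`, splitting over the events `{n' = n}` gives
`E[max_n γs n * J n] ≥ E[γs n'] * E J = E[max_n γs n] * E J`,
while `E[γs n * J n] = E[γs n] * E J` by independence; dividing yields the claim.
-/

open MeasureTheory ProbabilityTheory Finset

theorem measurable_univ_sup' {ι α : Type*} [Fintype ι] [Nonempty ι] [SemilatticeSup α]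
    [MeasurableSpace α] [MeasurableSup₂ α] :
    Measurable fun v : ι → α => univ.sup' univ_nonempty v := by
  convert Finset.measurable_sup' univ_nonempty
    fun n _ => measurable_pi_apply (X := fun _ : ι => α) n using 1
  ext v
  simp [Finset.sup'_apply]

theorem exists_measurable_argmax {ι α : Type*} [Fintype ι] [Nonempty ι] [LinearOrder α]
    [MeasurableSpace α] [MeasurableSup₂ α] [MeasurableEq α] :
    ∃ σ : (ι → α) → ι, (∀ n, MeasurableSet {v | σ v = n}) ∧
      ∀ v, v (σ v) = univ.sup' univ_nonempty v := by
  classical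
  let : LinearOrder ι := LinearOrder.lift' _ (Fintype.equivFin ι).injective
  let M : (ι → α) → α := fun v => univ.sup' univ_nonempty v
  have hmax : ∀ v, (univ.filter fun n => v n = M v).Nonempty := fun v => by
    obtain ⟨n, -, hn⟩ := exists_mem_eq_sup' univ_nonempty v
    exact ⟨n, by simpa using hn.symm⟩
  refine ⟨fun v => (univ.filter fun n => v n = M v).min' (hmax v), fun n => ?_,
    fun v => (mem_filter.1 (min'_mem _ (hmax v))).2⟩
  have hfiber : {v | (univ.filter fun n => v n = M v).min' (hmax v) = n} =
      {v | v n = M v ∧ ∀ m, v m = M v → n ≤ m} := by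
    ext v
    simp [min'_eq_iff]
  have hmax_eq : ∀ m, Measurable fun v : ι → α => v m = M v := fun m =>
    measurableSet_setOfPred.1 (measurableSet_eq_fun (measurable_pi_apply m) measurable_univ_sup')
  rw [hfiber]
  exact measurableSet_setOfPred.2
    ((hmax_eq n).and (.forall fun m => (hmax_eq m).imp measurable_const))

theorem apply_eq_sum_indicator {ι α E : Type*} [Fintype ι] [AddCommMonoid E]
    (F : ι → α → E) (σ : α → ι) (x : α) :
    F (σ x) x = ∑ n, {x | σ x = n}.indicator (F n) x := by
  classical
  simp only [Set.indicator_apply, Set.mem_ofPred_eq, Finset.sum_ite_eq, Finset.mem_univ, if_true]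

theorem integral_pos_of_ae_pos {α : Type*} [MeasurableSpace α] {μ : Measure α} [NeZero μ]
    {f : α → ℝ} (hf : Integrable f μ) (hpos : ∀ᵐ x ∂μ, 0 < f x) : 0 < ∫ x, f x ∂μ := by
  refine (integral_pos_iff_support_of_nonneg_ae (hpos.mono fun _ => le_of_lt) hf).2 ?_
  refine pos_iff_ne_zero.2 fun hnull => ?_
  have hzero : ∀ᵐ x ∂μ, f x = 0 := by
    simpa [ae_iff, Function.support] using hnull
  obtain ⟨x, hx, hx0⟩ := (hpos.and hzero).exists
  exact hx.ne' hx0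

theorem integrable_apply_of_measurableSet_fiber {Ω ι : Type*} [Fintype ι] {mΩ : MeasurableSpace Ω}
    {P : Measure Ω} {F : ι → Ω → ℝ} {τ : Ω → ι}
    (hF : ∀ n, Integrable (F n) P) (hτ : ∀ n, MeasurableSet {ω | τ ω = n}) :
    Integrable (fun ω => F (τ ω) ω) P := by
  simp_rw [apply_eq_sum_indicator F τ]
  exact integrable_finsetSum _ fun n _ => (hF n).indicator (hτ n)

namespace ProbabilityTheory

variable {Ω 𝓧 𝓨 ι : Type*} [Fintype ι] {mΩ : MeasurableSpace Ω} {P : Measure Ω}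
  [MeasurableSpace 𝓧] [MeasurableSpace 𝓨]

theorem IndepFun.integral_mul_apply_select {X : Ω → 𝓧} {Y : Ω → 𝓨} (hXY : IndepFun X Y P)
    (hX : Measurable X) (hY : Measurable Y) {σ : 𝓧 → ι} (hσ : ∀ n, MeasurableSet {x | σ x = n})
    {a : ι → 𝓧 → ℝ} {b : ι → 𝓨 → ℝ} (ha : ∀ n, Measurable (a n)) (hb : ∀ n, Measurable (b n))
    {c : ℝ} (hc : ∀ n, ∫ ω, b n (Y ω) ∂P = c)
    (ha_int : ∀ n, Integrable (fun ω => a n (X ω)) P)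
    (hab_int : ∀ n, Integrable (fun ω => a n (X ω) * b n (Y ω)) P) :
    ∫ ω, a (σ (X ω)) (X ω) * b (σ (X ω)) (Y ω) ∂P = c * ∫ ω, a (σ (X ω)) (X ω) ∂P := by
  classical
  have hab_sum : ∀ ω, a (σ (X ω)) (X ω) * b (σ (X ω)) (Y ω) =
      ∑ n, {x | σ x = n}.indicator (a n) (X ω) * b n (Y ω) := fun ω => by
    simp only [Set.indicator_apply, Set.mem_ofPred_eq, ite_mul, zero_mul, Finset.sum_ite_eq,
      Finset.mem_univ, if_true]
  have hab_fiber_int : ∀ n, Integrable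
      (fun ω => {x | σ x = n}.indicator (a n) (X ω) * b n (Y ω)) P := fun n => by
    refine ((hab_int n).indicator (hX (hσ n))).congr (ae_of_all _ fun ω => ?_)
    simp only [Set.indicator_apply, Set.mem_preimage, Set.mem_ofPred_eq, ite_mul, zero_mul]
  have hfactor : ∀ n, ∫ ω, {x | σ x = n}.indicator (a n) (X ω) * b n (Y ω) ∂P =
      (∫ ω, {x | σ x = n}.indicator (a n) (X ω) ∂P) * c := fun n => by
    rw [← hc n]
    exact hXY.integral_fun_comp_mul_comp hX.aemeasurable hY.aemeasurable
      ((ha n).indicator (hσ n)).aestronglyMeasurable (hb n).aestronglyMeasurable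
  have ha_fiber_int : ∀ n, Integrable (fun ω => {x | σ x = n}.indicator (a n) (X ω)) P :=
    fun n => (ha_int n).indicator (hX (hσ n))
  calc ∫ ω, a (σ (X ω)) (X ω) * b (σ (X ω)) (Y ω) ∂P
      = ∑ n, ∫ ω, {x | σ x = n}.indicator (a n) (X ω) * b n (Y ω) ∂P := by
        simp_rw [hab_sum]
        exact integral_finsetSum _ fun n _ => hab_fiber_int n
    _ = (∑ n, ∫ ω, {x | σ x = n}.indicator (a n) (X ω) ∂P) * c := by
        simp_rw [hfactor, sum_mul]
    _ = c * ∫ ω, a (σ (X ω)) (X ω) ∂P := by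
        rw [mul_comm, ← integral_finsetSum _ fun n _ => ha_fiber_int n]
        simp_rw [apply_eq_sum_indicator a σ]

theorem IndepFun.mul_integral_sup'_le_integral_sup'_mul [Nonempty ι] {X : Ω → ι → ℝ}
    {Y : Ω → 𝓨} (hXY : IndepFun X Y P) (hX : Measurable X) (hY : Measurable Y)
    {b : ι → 𝓨 → ℝ} (hb : ∀ n, Measurable (b n)) {c : ℝ} (hc : ∀ n, ∫ ω, b n (Y ω) ∂P = c)
    (hX_int : ∀ n, Integrable (fun ω => X ω n) P)
    (hXb_int : ∀ n, Integrable (fun ω => X ω n * b n (Y ω)) P)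
    (hsup_int : Integrable (fun ω => univ.sup' univ_nonempty fun n => X ω n * b n (Y ω)) P) :
    c * ∫ ω, univ.sup' univ_nonempty (X ω) ∂P ≤
      ∫ ω, univ.sup' univ_nonempty (fun n => X ω n * b n (Y ω)) ∂P := by
  obtain ⟨σ, hσ, hσ_max⟩ := exists_measurable_argmax (ι := ι) (α := ℝ)
  have hselect := hXY.integral_mul_apply_select hX hY hσ (a := fun n v => v n)
    (fun n => measurable_pi_apply n) hb hc hX_int hXb_int
  calc c * ∫ ω, univ.sup' univ_nonempty (X ω) ∂P
      = ∫ ω, X ω (σ (X ω)) * b (σ (X ω)) (Y ω) ∂P := by rw [hselect]; simp only [hσ_max]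
    _ ≤ ∫ ω, univ.sup' univ_nonempty (fun n => X ω n * b n (Y ω)) ∂P :=
        integral_mono (integrable_apply_of_measurableSet_fiber hXb_int fun n => hX (hσ n))
          hsup_int fun ω => le_sup' (fun n => X ω n * b n (Y ω)) (mem_univ _)

end ProbabilityTheory

theorem pac_gain_ge_reference_gain_general
    {Ω : Type*} [MeasureSpace Ω] (P : Measure Ω) [IsProbabilityMeasure P]
    (N : ℕ) (hN : 0 < N)
    (Qp γp : ℝ) (hQp : 0 < Qp) (hγp : 0 < γp)
    (γs γsp γps : Fin N → Ω → ℝ)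
    (hmeas_s : ∀ n, Measurable (γs n)) (hmeas_sp : ∀ n, Measurable (γsp n))
    (hmeas_ps : ∀ n, Measurable (γps n))
    (hpos_s : ∀ n, ∀ᵐ ω ∂P, 0 < γs n ω) (hpos_sp : ∀ n, ∀ᵐ ω ∂P, 0 < γsp n ω)
    (hpos_ps : ∀ n, ∀ᵐ ω ∂P, 0 < γps n ω)
    -- the per-user triples are i.i.d. across users
    (hiid : ∀ n : Fin N,
      Measure.map (fun ω => (γs n ω, γsp n ω, γps n ω)) P
        = Measure.map (fun ω => (γs ⟨0, hN⟩ ω, γsp ⟨0, hN⟩ ω, γps ⟨0, hN⟩ ω)) P)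
    -- the SU-to-SU channels are independent of the interference channels
    (hindep_si : IndepFun (fun ω (n : Fin N) => γs n ω)
      (fun ω (n : Fin N) => (γsp n ω, γps n ω)) P)
    -- integrability of all relevant quantities
    (hint_max_sinr : Integrable (fun ω => Finset.univ.sup'
        (Finset.univ_nonempty_iff.mpr ⟨⟨0, hN⟩⟩)
        (fun n => γs n ω * Qp / (γsp n ω * (1 + γp * γps n ω)))) P)
    (hint_sinr : ∀ n, Integrable (fun ω => γs n ω * Qp / (γsp n ω * (1 + γp * γps n ω))) P)
    (hint_s : ∀ n, Integrable (γs n) P) :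
    (∫ ω, Finset.univ.sup' (Finset.univ_nonempty_iff.mpr ⟨⟨0, hN⟩⟩)
        (fun n => γs n ω * Qp / (γsp n ω * (1 + γp * γps n ω))) ∂P)
      / (∫ ω, γs ⟨0, hN⟩ ω * Qp / (γsp ⟨0, hN⟩ ω * (1 + γp * γps ⟨0, hN⟩ ω)) ∂P)
    ≥ (∫ ω, Finset.univ.sup' (Finset.univ_nonempty_iff.mpr ⟨⟨0, hN⟩⟩)
        (fun n => γs n ω) ∂P) / (∫ ω, γs ⟨0, hN⟩ ω ∂P) := by
  set n₀ : Fin N := ⟨0, hN⟩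
  have : Nonempty (Fin N) := ⟨n₀⟩
  set Y : Ω → Fin N → ℝ × ℝ := fun ω n => (γsp n ω, γps n ω)
  set b : Fin N → (Fin N → ℝ × ℝ) → ℝ := fun n w => Qp / ((w n).1 * (1 + γp * (w n).2))
  set c := ∫ ω, b n₀ (Y ω) ∂P
  have hb : ∀ n, Measurable (b n) := fun n => by fun_prop
  have hc : ∀ n, ∫ ω, b n (Y ω) ∂P = c := fun n =>
    (IdentDistrib.comp ⟨by fun_prop, by fun_prop, hiid n⟩
      (u := fun p : ℝ × ℝ × ℝ => Qp / (p.2.1 * (1 + γp * p.2.2))) (by fun_prop)).integral_eq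
  have hsinr : ∀ n ω, γs n ω * Qp / (γsp n ω * (1 + γp * γps n ω)) = γs n ω * b n (Y ω) :=
    fun n ω => mul_div_assoc _ _ _
  have hdiversity := hindep_si.mul_integral_sup'_le_integral_sup'_mul (by fun_prop) (by fun_prop)
    hb hc hint_s (by simpa only [hsinr] using hint_sinr) (by simpa only [hsinr] using hint_max_sinr)
  have hsinr₀ : ∫ ω, γs n₀ ω * Qp / (γsp n₀ ω * (1 + γp * γps n₀ ω)) ∂P =
      (∫ ω, γs n₀ ω ∂P) * c := by
    simp only [hsinr]
    exact hindep_si.integral_fun_comp_mul_comp (f := fun v => v n₀) (by fun_prop) (by fun_prop)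
      (measurable_pi_apply n₀).aestronglyMeasurable (hb n₀).aestronglyMeasurable
  have hs₀_pos : 0 < ∫ ω, γs n₀ ω ∂P := integral_pos_of_ae_pos (hint_s n₀) (hpos_s n₀)
  have hsinr₀_pos : 0 < ∫ ω, γs n₀ ω * Qp / (γsp n₀ ω * (1 + γp * γps n₀ ω)) ∂P := by
    refine integral_pos_of_ae_pos (hint_sinr n₀) ?_
    filter_upwards [hpos_s n₀, hpos_sp n₀, hpos_ps n₀] with ω hs hsp hps
    positivity
  have hc_pos : 0 < c := pos_of_mul_pos_right (hsinr₀ ▸ hsinr₀_pos) hs₀_pos.le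
  simp only [hsinr] at hsinr₀ ⊢
  rw [hsinr₀, ge_iff_le]
  calc (∫ ω, univ.sup' univ_nonempty (fun n => γs n ω) ∂P) / ∫ ω, γs n₀ ω ∂P
      = (c * ∫ ω, univ.sup' univ_nonempty (fun n => γs n ω) ∂P) / ((∫ ω, γs n₀ ω ∂P) * c) := by
        field_simp
    _ ≤ _ := by gcongr

/-- In the `N`-user underlay cognitive parallel access channel, the combined multiuser
diversity gain of max-SINR scheduling is at least the multiuser diversity gain of the
reference network: `γ̄_PAC(N) ≥ γ̄_o(N)`. -/
theorem pac_gain_ge_reference_gain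
    {Ω : Type*} [MeasureSpace Ω] (P : Measure Ω) [IsProbabilityMeasure P]
    (N : ℕ) (hN : 0 < N)
    (Qp γp : ℝ) (hQp : 0 < Qp) (hγp : 0 < γp)
    (γs γsp γps : Fin N → Ω → ℝ)
    (hmeas_s : ∀ n, Measurable (γs n)) (hmeas_sp : ∀ n, Measurable (γsp n))
    (hmeas_ps : ∀ n, Measurable (γps n))
    (hpos_s : ∀ n, ∀ᵐ ω ∂P, 0 < γs n ω) (hpos_sp : ∀ n, ∀ᵐ ω ∂P, 0 < γsp n ω)
    (hpos_ps : ∀ n, ∀ᵐ ω ∂P, 0 < γps n ω)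
    -- the per-user triples are i.i.d. across users
    (hiid : ∀ n : Fin N,
      Measure.map (fun ω => (γs n ω, γsp n ω, γps n ω)) P
        = Measure.map (fun ω => (γs ⟨0, hN⟩ ω, γsp ⟨0, hN⟩ ω, γps ⟨0, hN⟩ ω)) P)
    (hindep_users : iIndepFun
      (fun n ω => (γs n ω, γsp n ω, γps n ω)) P)
    -- the SU-to-SU channels are independent of the interference channels
    (hindep_si : IndepFun (fun ω (n : Fin N) => γs n ω)
      (fun ω (n : Fin N) => (γsp n ω, γps n ω)) P)
    -- integrability of all relevant quantities
    (hint_max_sinr : Integrable (fun ω => Finset.univ.sup'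
        (Finset.univ_nonempty_iff.mpr ⟨⟨0, hN⟩⟩)
        (fun n => γs n ω * Qp / (γsp n ω * (1 + γp * γps n ω)))) P)
    (hint_sinr : ∀ n, Integrable (fun ω => γs n ω * Qp / (γsp n ω * (1 + γp * γps n ω))) P)
    (hint_max_s : Integrable (fun ω => Finset.univ.sup'
        (Finset.univ_nonempty_iff.mpr ⟨⟨0, hN⟩⟩) (fun n => γs n ω)) P)
    (hint_s : ∀ n, Integrable (γs n) P) :
    (∫ ω, Finset.univ.sup' (Finset.univ_nonempty_iff.mpr ⟨⟨0, hN⟩⟩)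
        (fun n => γs n ω * Qp / (γsp n ω * (1 + γp * γps n ω))) ∂P)
      / (∫ ω, γs ⟨0, hN⟩ ω * Qp / (γsp ⟨0, hN⟩ ω * (1 + γp * γps ⟨0, hN⟩ ω)) ∂P)
    ≥ (∫ ω, Finset.univ.sup' (Finset.univ_nonempty_iff.mpr ⟨⟨0, hN⟩⟩)
        (fun n => γs n ω) ∂P) / (∫ ω, γs ⟨0, hN⟩ ω ∂P) :=
  pac_gain_ge_reference_gain_general P N hN Qp γp hQp hγp γs γsp γps hmeas_s hmeas_sp hmeas_ps
    hpos_s hpos_sp hpos_ps hiid hindep_si hint_max_sinr hint_sinr hint_s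
end
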